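/- arXiv:2201.00421 — 2 statements merged into one kernel-verified Lean document; each statement's English description precedes it below -/
import Mathlib

section
/- Let A = ⊛_ℕ B be the infinite Fermi C*-tensor product of a unital Z₂-graded C*-algebra B, with the action of the finite-permutation group ℙ. If a is an odd localized element of A (an element of the algebraic part with θ(a) = -a), then E_ω π_ω(a) E_ω = 0 for every symmetric state ω, where E_ω is the projection onto the U_ω(ℙ)-invariant vectors. -/
open scoped ComplexOrder

/-- A state on a unital complex *-algebra, written as a plain function. -/
def IsStateOn {R : Type*} [Ring R] [Algebra ℂ R] [StarRing R] (f : R → ℂ) : Prop :=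
  (∀ x y, f (x + y) = f x + f y) ∧ (∀ (c : ℂ) (x), f (c • x) = c * f x) ∧
    f 1 = 1 ∧ ∀ x, 0 ≤ f (star x * x)

/-- The group of finitary permutations of `ℕ` (those moving only finitely many points). -/
def finitaryPerms : Subgroup (Equiv.Perm ℕ) where
  carrier := {g | {k | g k ≠ k}.Finite}
  one_mem' := by
    show Set.Finite {k : ℕ | (1 : Equiv.Perm ℕ) k ≠ k}
    have h : {k : ℕ | (1 : Equiv.Perm ℕ) k ≠ k} = (∅ : Set ℕ) := by ext k; simp
    rw [h]; exact Set.finite_empty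
  mul_mem' := by
    intro g h hg hh
    show Set.Finite {k : ℕ | (g * h) k ≠ k}
    refine Set.Finite.subset (Set.Finite.union hh (hg.preimage h.injective.injOn)) ?_
    intro k hk
    simp only [Set.mem_setOf_eq, Equiv.Perm.mul_apply] at hk
    by_cases hhk : h k = k
    · right
      simp only [Set.mem_preimage, Set.mem_setOf_eq, hhk]
      rwa [hhk] at hk
    · left; exact hhk
  inv_mem' := by
    intro g hg
    show Set.Finite {k : ℕ | g⁻¹ k ≠ k}
    refine Set.Finite.subset (hg.image g) ?_
    intro k hk
    simp only [Set.mem_setOf_eq] at hk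
    exact ⟨g⁻¹ k, by show g (g⁻¹ k) ≠ g⁻¹ k; rw [show g (g⁻¹ k) = k from Equiv.apply_symm_apply g k]; exact Ne.symm hk,
      Equiv.apply_symm_apply g k⟩


/-!
A localized element `a` lives on finitely many factors `[0, M)`, so finitary permutations
`g n` carry it to copies `a n = α_{g n} a` on pairwise disjoint blocks. Odd elements on
disjoint blocks anticommute, so in `s*s + ss*` for `s = ∑_{n<N} π (a n)` all cross terms
cancel and `‖s‖² ≤ 2N‖a‖²`. Since `E` absorbs every `U g`, each `π (a n)` has the same
compression `E π(a) E`, whence `N ‖E π(a) E‖ ≤ ‖E‖² ‖s‖ ≤ ‖E‖² √(2N) ‖a‖` for all `N`,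
so `E π(a) E = 0`.
-/

theorem eq_of_add_self_eq_add_self {A : Type*} [AddCommGroup A] [Module ℂ A] {x y : A}
    (h : x + x = y + y) : x = y :=
  smul_right_injective A (two_ne_zero : (2 : ℂ) ≠ 0) (by simpa only [two_smul] using h)

section GradedCommutation

variable {A : Type*} [Ring A] [StarRing A] [Algebra ℂ A]

/-- `x` commutes with the even part of `y` and passes its odd part at the cost of a grading
twist; for homogeneous `x`, `y` this is the Fermi rule `x * y = ± y * x`. -/
def GradedCommute (θ : A ≃⋆ₐ[ℂ] A) (x y : A) : Prop :=
  x * (y + θ y) = (y + θ y) * x ∧ x * (y - θ y) = (y - θ y) * θ x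

namespace GradedCommute

variable {θ : A ≃⋆ₐ[ℂ] A} {x y z : A}

theorem algebraMap_left (r : ℂ) (y : A) : GradedCommute θ (algebraMap ℂ A r) y := by
  rw [GradedCommute, AlgHomClass.commutes]
  exact ⟨Algebra.commutes r _, Algebra.commutes r _⟩

theorem add_left (hx : GradedCommute θ x y) (hz : GradedCommute θ z y) :
    GradedCommute θ (x + z) y := by
  refine ⟨?_, ?_⟩
  · rw [add_mul, hx.1, hz.1, mul_add]
  · rw [add_mul, hx.2, hz.2, map_add, mul_add]

theorem mul_left (hx : GradedCommute θ x y) (hz : GradedCommute θ z y) :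
    GradedCommute θ (x * z) y := by
  refine ⟨?_, ?_⟩
  · rw [mul_assoc, hz.1, ← mul_assoc, hx.1, mul_assoc]
  · rw [map_mul, mul_assoc, hz.2, ← mul_assoc, hx.2, mul_assoc]

theorem star_left (hθ : Function.Involutive θ) (h : GradedCommute θ x (star y)) :
    GradedCommute θ (star x) y := by
  have h1 := congrArg star h.1
  have h2 := congrArg (fun w => θ (star w)) h.2
  simp only [star_mul, star_add, star_sub, star_star, map_star, map_mul, map_sub, hθ _] at h1 h2
  refine ⟨h1.symm, ?_⟩
  rw [map_star, ← neg_sub (θ y) y, mul_neg, neg_mul, h2]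

theorem symm (hθ : Function.Involutive θ) (h : GradedCommute θ x y) : GradedCommute θ y x := by
  have h1' : θ x * (y + θ y) = (y + θ y) * θ x := by
    simpa only [map_mul, map_add, hθ y, add_comm y] using congrArg θ h.1
  have h2' : θ x * (y - θ y) = (y - θ y) * x := by
    have := congrArg θ h.2
    simp only [map_mul, map_sub, hθ _] at this
    rwa [← neg_sub y, mul_neg, neg_mul, neg_inj] at this
  -- `y + y` is the sum of the even and odd parts of `y`, each of which obeys a relation with `x`
  refine ⟨eq_of_add_self_eq_add_self ?_, eq_of_add_self_eq_add_self ?_⟩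
  · calc y * (x + θ x) + y * (x + θ x)
        = (y + θ y) * x + (y + θ y) * θ x + ((y - θ y) * x + (y - θ y) * θ x) := by noncomm_ring
      _ = x * (y + θ y) + θ x * (y + θ y) + (θ x * (y - θ y) + x * (y - θ y)) := by
        rw [h.1, h1', h.2, h2']
      _ = (x + θ x) * y + (x + θ x) * y := by noncomm_ring
  · calc y * (x - θ x) + y * (x - θ x)
        = (y + θ y) * x - (y + θ y) * θ x + ((y - θ y) * x - (y - θ y) * θ x) := by noncomm_ring
      _ = x * (y + θ y) - θ x * (y + θ y) + (θ x * (y - θ y) - x * (y - θ y)) := by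
        rw [h.1, h1', h.2, h2']
      _ = (x - θ x) * θ y + (x - θ x) * θ y := by noncomm_ring

theorem anticommute (h : GradedCommute θ x y) (hx : θ x = -x) (hy : θ y = -y) :
    x * y = -(y * x) := by
  have h2 := h.2
  rw [hx, hy, sub_neg_eq_add, mul_add, add_mul, mul_neg] at h2
  exact eq_of_add_self_eq_add_self h2

theorem of_mem_adjoin_left [StarModule ℂ A] {S T : Set A} (hθ : Function.Involutive θ)
    (hT : ∀ y ∈ T, star y ∈ T) (h : ∀ x ∈ S, ∀ y ∈ T, GradedCommute θ x y)
    (hx : x ∈ StarAlgebra.adjoin ℂ S) (hy : y ∈ T) : GradedCommute θ x y := by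
  induction hx using StarAlgebra.adjoin_induction generalizing y with
  | mem x hx => exact h x hx y hy
  | algebraMap r => exact algebraMap_left r y
  | add x z _ _ hx hz => exact (hx hy).add_left (hz hy)
  | mul x z _ _ hx hz => exact (hx hy).mul_left (hz hy)
  | star x _ hx => exact (hx (hT y hy)).star_left hθ

theorem of_mem_adjoin [StarModule ℂ A] {S T : Set A} (hθ : Function.Involutive θ)
    (hT : ∀ y ∈ T, star y ∈ T) (h : ∀ x ∈ S, ∀ y ∈ T, GradedCommute θ x y)
    (hx : x ∈ StarAlgebra.adjoin ℂ S) (hy : y ∈ StarAlgebra.adjoin ℂ T) :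
    GradedCommute θ x y :=
  (of_mem_adjoin_left hθ (fun _ => star_mem)
    (fun _ hy' _ hx' => (of_mem_adjoin_left hθ hT h hx' hy').symm hθ) hy hx).symm hθ

end GradedCommute

end GradedCommutation

section LocalAlgebra

variable {J B A : Type*} [Ring B] [StarRing B] [Algebra ℂ B]
  [Ring A] [StarRing A] [Algebra ℂ A]

theorem gradedCommute_of_ne {β : B ≃⋆ₐ[ℂ] B} (hβ : Function.Involutive β)
    {θ : A ≃⋆ₐ[ℂ] A} {ι : J → B →⋆ₐ[ℂ] A} (hθι : ∀ j b, θ (ι j b) = ι j (β b))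
    (hcomm : ∀ i j, i ≠ j → ∀ b b', (β b = b ∨ β b' = b') →
      ι i b * ι j b' = ι j b' * ι i b)
    (hanti : ∀ i j, i ≠ j → ∀ b b', β b = -b → β b' = -b' →
      ι i b * ι j b' = -(ι j b' * ι i b))
    {i j : J} (hij : i ≠ j) (b b' : B) : GradedCommute θ (ι i b) (ι j b') := by
  rw [GradedCommute, hθι, hθι, ← map_add, ← map_sub]
  have heven : ∀ c, β (c + β c) = c + β c := fun c => by rw [map_add, hβ, add_comm]
  have hodd : ∀ c, β (c - β c) = -(c - β c) := fun c => by rw [map_sub, hβ, neg_sub]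
  refine ⟨hcomm i j hij _ _ (Or.inr (heven b')), eq_of_add_self_eq_add_self ?_⟩
  set c := b' - β b'
  -- split `b + b` into its even and odd parts
  calc ι i b * ι j c + ι i b * ι j c = ι i (b + β b) * ι j c + ι i (b - β b) * ι j c := by
        simp only [map_add, map_sub]; noncomm_ring
    _ = ι j c * ι i (b + β b) - ι j c * ι i (b - β b) := by
        rw [hcomm i j hij _ _ (Or.inl (heven b)), hanti i j hij _ _ (hodd b) (hodd b')]
        abel
    _ = ι j c * ι i (β b) + ι j c * ι i (β b) := by simp only [map_add, map_sub]; noncomm_ring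

variable [StarModule ℂ A]

def localAlgebra (ι : J → B →⋆ₐ[ℂ] A) (I : Set J) : StarSubalgebra ℂ A :=
  StarAlgebra.adjoin ℂ (⋃ j ∈ I, Set.range (ι j))

theorem localAlgebra_mono (ι : J → B →⋆ₐ[ℂ] A) {I I' : Set J} (h : I ⊆ I') :
    localAlgebra ι I ≤ localAlgebra ι I' :=
  StarAlgebra.adjoin_mono (Set.biUnion_subset_biUnion_left h)

theorem exists_mem_localAlgebra_Iio (ι : ℕ → B →⋆ₐ[ℂ] A) {a : A}
    (ha : a ∈ StarAlgebra.adjoin ℂ (⋃ j, Set.range (ι j))) :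
    ∃ M, a ∈ localAlgebra ι (Set.Iio M) := by
  have hunion : ⋃ j, Set.range (ι j) = ⋃ M, ⋃ j ∈ Set.Iio M, Set.range (ι j) := by
    ext x
    simp only [Set.mem_iUnion, Set.mem_Iio, exists_prop]
    exact ⟨fun ⟨j, hj⟩ => ⟨j + 1, j, j.lt_succ_self, hj⟩, fun ⟨_, j, _, hj⟩ => ⟨j, hj⟩⟩
  rw [hunion, ← Set.iSup_eq_iUnion, StarAlgebra.gc.l_iSup] at ha
  change a ∈ ((⨆ M, localAlgebra ι (Set.Iio M) : StarSubalgebra ℂ A) : Set A) at ha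
  rw [StarSubalgebra.coe_iSup_of_directed
      (Monotone.directed_le fun _ _ h => localAlgebra_mono ι (Set.Iio_subset_Iio h))] at ha
  simpa only [Set.mem_iUnion, SetLike.mem_coe] using ha

theorem localAlgebra_le_comap (ι : J → B →⋆ₐ[ℂ] A) (f : A →⋆ₐ[ℂ] A) {σ : J → J}
    (hf : ∀ j b, f (ι j b) = ι (σ j) b) {I I' : Set J} (hσ : Set.MapsTo σ I I') :
    localAlgebra ι I ≤ (localAlgebra ι I').comap f := by
  refine StarAlgebra.adjoin_le ?_
  simp only [Set.iUnion_subset_iff, Set.range_subset_iff]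
  intro j hj b
  rw [SetLike.mem_coe, StarSubalgebra.mem_comap, hf]
  exact StarAlgebra.subset_adjoin ℂ _ (Set.mem_biUnion (hσ hj) ⟨b, rfl⟩)

theorem eq_of_mem_localAlgebra {ι : J → B →⋆ₐ[ℂ] A} {I : Set J} (f g : A →⋆ₐ[ℂ] A)
    (h : ∀ j ∈ I, ∀ b, f (ι j b) = g (ι j b)) {x : A} (hx : x ∈ localAlgebra ι I) : f x = g x := by
  refine StarAlgHom.adjoin_le_equalizer f g ?_ hx
  simp only [Set.EqOn, Set.mem_iUnion, Set.mem_range]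
  rintro _ ⟨j, hj, b, rfl⟩
  exact h j hj b

theorem gradedCommute_of_disjoint {β : B ≃⋆ₐ[ℂ] B} (hβ : Function.Involutive β)
    {θ : A ≃⋆ₐ[ℂ] A} (hθ : Function.Involutive θ) {ι : J → B →⋆ₐ[ℂ] A}
    (hθι : ∀ j b, θ (ι j b) = ι j (β b))
    (hcomm : ∀ i j, i ≠ j → ∀ b b', (β b = b ∨ β b' = b') →
      ι i b * ι j b' = ι j b' * ι i b)
    (hanti : ∀ i j, i ≠ j → ∀ b b', β b = -b → β b' = -b' →
      ι i b * ι j b' = -(ι j b' * ι i b))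
    {I I' : Set J} (hII' : Disjoint I I') {x y : A}
    (hx : x ∈ localAlgebra ι I) (hy : y ∈ localAlgebra ι I') : GradedCommute θ x y := by
  refine GradedCommute.of_mem_adjoin hθ ?_ ?_ hx hy
  · simp only [Set.mem_iUnion, Set.mem_range]
    rintro _ ⟨j, hj, b, rfl⟩
    exact ⟨j, hj, star b, map_star (ι j) b⟩
  · simp only [Set.mem_iUnion, Set.mem_range]
    rintro _ ⟨i, hi, b, rfl⟩ _ ⟨j, hj, b', rfl⟩
    exact gradedCommute_of_ne hβ hθι hcomm hanti (hII'.ne_of_mem hi hj) b b'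

end LocalAlgebra

theorem exists_finitaryPerm_add {M t : ℕ} (ht : M ≤ t) :
    ∃ g : finitaryPerms, ∀ k < M, (g : Equiv.Perm ℕ) k = k + t := by
  let f : ℕ → ℕ := fun k => if k < M then k + t else if t ≤ k ∧ k < t + M then k - t else k
  have hf : Function.Involutive f := fun k => by simp only [f]; split_ifs <;> omega
  refine ⟨⟨hf.toPerm f, (Set.finite_Iio (t + M)).subset fun k hk => ?_⟩, fun k hk => if_pos hk⟩
  simp only [Set.mem_ofPred_eq, Function.Involutive.coe_toPerm, f] at hk
  simp only [Set.mem_Iio]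
  split_ifs at hk <;> omega

theorem disjoint_Ico_mul_add {M m n : ℕ} (hmn : m ≠ n) :
    Disjoint (Set.Ico (m * M) (m * M + M)) (Set.Ico (n * M) (n * M + M)) := by
  refine Set.disjoint_left.2 fun k hkm hkn => ?_
  simp only [Set.mem_Ico] at hkm hkn
  rcases Nat.lt_or_gt_of_ne hmn with h | h
  · nlinarith [Nat.mul_le_mul_right M (Nat.succ_le_of_lt h)]
  · nlinarith [Nat.mul_le_mul_right M (Nat.succ_le_of_lt h)]

theorem nonpos_of_forall_nat_mul_le {a b : ℝ} (h : ∀ N : ℕ, N * a ≤ b) : a ≤ 0 := by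
  by_contra! ha
  obtain ⟨N, hN⟩ := exists_lt_nsmul ha b
  exact (h N).not_gt (by rwa [nsmul_eq_mul] at hN)

section CStarAlgebra

variable {C : Type*} [NonUnitalCStarAlgebra C] [PartialOrder C] [StarOrderedRing C]

theorem norm_sum_sq_le_of_anticommute {κ : Type*} (s : Finset κ) (x : κ → C)
    (h : ∀ i ∈ s, ∀ j ∈ s, i ≠ j → star (x i) * x j + x j * star (x i) = 0) :
    ‖∑ i ∈ s, x i‖ ^ 2 ≤ 2 * ∑ i ∈ s, ‖x i‖ ^ 2 := by
  set S := ∑ i ∈ s, x i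
  have hS : star S * S + S * star S = ∑ i ∈ s, (star (x i) * x i + x i * star (x i)) := by
    simp only [S, star_sum, Finset.sum_mul_sum]
    rw [Finset.sum_comm (f := fun i j => x i * star (x j)), ← Finset.sum_add_distrib]
    refine Finset.sum_congr rfl fun i hi => ?_
    rw [← Finset.sum_add_distrib]
    exact Finset.sum_eq_single_of_mem i hi fun j hj hji => h i hi j hj hji.symm
  calc ‖S‖ ^ 2 = ‖star S * S‖ := by rw [CStarRing.norm_star_mul_self, sq]
    _ ≤ ‖star S * S + S * star S‖ := CStarAlgebra.norm_le_norm_of_nonneg_of_le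
        (star_mul_self_nonneg S) (le_add_of_nonneg_right (mul_star_self_nonneg S))
    _ ≤ ∑ i ∈ s, ‖star (x i) * x i + x i * star (x i)‖ := hS ▸ norm_sum_le _ _
    _ ≤ ∑ i ∈ s, 2 * ‖x i‖ ^ 2 := Finset.sum_le_sum fun i _ => (norm_add_le _ _).trans_eq
        (by rw [CStarRing.norm_star_mul_self, CStarRing.norm_self_mul_star]; ring)
    _ = 2 * ∑ i ∈ s, ‖x i‖ ^ 2 := (Finset.mul_sum _ _ _).symm

/-- The averages `N⁻¹ ∑_{n<N} x n` have norm `O(N^{-1/2})`, yet all compress to `t`. -/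
theorem eq_zero_of_compression_eq (e t : C) (x : ℕ → C) (c : ℝ) (hx : ∀ n, ‖x n‖ ≤ c)
    (hanti : ∀ m n, m ≠ n → star (x m) * x n + x n * star (x m) = 0)
    (hcomp : ∀ n, e * x n * e = t) : t = 0 := by
  have hbound : ∀ N : ℕ, N * ‖t‖ ^ 2 ≤ 2 * ‖e‖ ^ 4 * c ^ 2 := by
    intro N
    have hsum : N • t = e * (∑ n ∈ Finset.range N, x n) * e := by
      simp only [Finset.mul_sum, Finset.sum_mul, hcomp, Finset.sum_const, Finset.card_range]
    have hnorm : N * ‖t‖ ≤ ‖e‖ ^ 2 * ‖∑ n ∈ Finset.range N, x n‖ := by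
      calc (N : ℝ) * ‖t‖ = ‖N • t‖ := by rw [RCLike.norm_nsmul ℂ, nsmul_eq_mul]
        _ ≤ ‖e‖ * ‖∑ n ∈ Finset.range N, x n‖ * ‖e‖ := hsum ▸ norm_mul₃_le
        _ = ‖e‖ ^ 2 * ‖∑ n ∈ Finset.range N, x n‖ := by ring
    have hsq : ‖∑ n ∈ Finset.range N, x n‖ ^ 2 ≤ 2 * (N * c ^ 2) := by
      refine (norm_sum_sq_le_of_anticommute _ x fun m _ n _ => hanti m n).trans ?_
      gcongr
      calc ∑ n ∈ Finset.range N, ‖x n‖ ^ 2 ≤ ∑ _n ∈ Finset.range N, c ^ 2 :=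
            Finset.sum_le_sum fun n _ => pow_le_pow_left₀ (norm_nonneg _) (hx n) 2
        _ = N * c ^ 2 := by rw [Finset.sum_const, Finset.card_range, nsmul_eq_mul]
    rcases N.eq_zero_or_pos with rfl | hN
    · simp only [CharP.cast_eq_zero, zero_mul]; positivity
    · have hN' : (0 : ℝ) < N := Nat.cast_pos.2 hN
      refine le_of_mul_le_mul_left ?_ hN'
      calc (N : ℝ) * (N * ‖t‖ ^ 2) = (N * ‖t‖) ^ 2 := by ring
        _ ≤ (‖e‖ ^ 2 * ‖∑ n ∈ Finset.range N, x n‖) ^ 2 := by gcongr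
        _ = ‖e‖ ^ 4 * ‖∑ n ∈ Finset.range N, x n‖ ^ 2 := by ring
        _ ≤ ‖e‖ ^ 4 * (2 * (N * c ^ 2)) := by gcongr
        _ = N * (2 * ‖e‖ ^ 4 * c ^ 2) := by ring
  exact norm_eq_zero.1 (pow_eq_zero_iff two_ne_zero |>.1
    ((nonpos_of_forall_nat_mul_le hbound).antisymm (by positivity)))

end CStarAlgebra

theorem mul_mul_eq_of_unitary_mul_eq {R : Type*} [Monoid R] [StarMul R] {e u y y' : R}
    (he : IsSelfAdjoint e) (hu : u ∈ unitary R) (hue : u * e = e) (h : u * y = y' * u) :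
    e * y' * e = e * y * e := by
  have h1 : star u * e = e := by
    conv_lhs => rw [← hue, ← mul_assoc, Unitary.star_mul_self_of_mem hu, one_mul]
  have h2 : e * u = e := by simpa only [star_mul, star_star, he.star_eq] using congrArg star h1
  calc e * y' * e = e * (y' * u * star u) * e := by
        rw [mul_assoc y', Unitary.mul_star_self_of_mem hu, mul_one]
    _ = (e * u) * y * (star u * e) := by rw [← h]; simp only [mul_assoc]
    _ = e * y * e := by rw [h1, h2]

theorem deFinetti_stmt13_general
(B : Type) [CStarAlgebra B] (β : B ≃⋆ₐ[ℂ] B) (hβ : ∀ b, β (β b) = b)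
    (A : Type) [CStarAlgebra A]
    (θ : A ≃⋆ₐ[ℂ] A) (hθ : ∀ a, θ (θ a) = a)
    (ι : ℕ → B →⋆ₐ[ℂ] A)
    (hθι : ∀ j b, θ (ι j b) = ι j (β b))
    (hcomm : ∀ i j, i ≠ j → ∀ b b', (β b = b ∨ β b' = b') →
      ι i b * ι j b' = ι j b' * ι i b)
    (hanti : ∀ i j, i ≠ j → ∀ b b', β b = -b → β b' = -b' →
      ι i b * ι j b' = -(ι j b' * ι i b))
    (act : finitaryPerms → A ≃⋆ₐ[ℂ] A)
    (hactι : ∀ g j b, act g (ι j b) = ι ((g : Equiv.Perm ℕ) j) b)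
(H : Type) [NormedAddCommGroup H] [InnerProductSpace ℂ H] [CompleteSpace H]
    (π : A →⋆ₐ[ℂ] (H →L[ℂ] H))
    (U : finitaryPerms → (H →L[ℂ] H))
    (hUunitary : ∀ g, U g ∈ unitary (H →L[ℂ] H))
    (hcov : ∀ g a, U g * π a = π (act g a) * U g)
(E : H →L[ℂ] H)
    (hEsa : ContinuousLinearMap.adjoint E = E)
    (hEinv : ∀ (x : H) (g), U g (E x) = E x) :
    ∀ a : A, a ∈ StarAlgebra.adjoin ℂ (⋃ j, Set.range (ι j)) → θ a = -a →
      E * π a * E = 0 := by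
  intro a ha hodd
  obtain ⟨M, haM⟩ := exists_mem_localAlgebra_Iio ι ha
  -- `g n` shifts the support `[0, M)` of `a` onto `[(n+1)M, (n+2)M)`, clear of `[0, M)`
  choose g hg using fun n : ℕ =>
    exists_finitaryPerm_add (t := (n + 1) * M) (Nat.le_mul_of_pos_left M n.succ_pos)
  have hloc : ∀ n, act (g n) a ∈ localAlgebra ι (Set.Ico ((n + 1) * M) ((n + 1) * M + M)) :=
    fun n => localAlgebra_le_comap ι (act (g n)) (hactι (g n))
      (fun k hk => by rw [Set.mem_Iio] at hk; simp only [hg n k hk, Set.mem_Ico]; omega) haM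
  have hodd_act : ∀ n, θ (act (g n) a) = -act (g n) a := fun n => by
    have h := eq_of_mem_localAlgebra ((θ : A →⋆ₐ[ℂ] A).comp (act (g n)))
      ((act (g n) : A →⋆ₐ[ℂ] A).comp θ)
      (fun j _ b => by simp only [StarAlgHom.comp_apply, StarAlgHom.coe_coe, hactι, hθι]) haM
    simpa only [StarAlgHom.comp_apply, StarAlgHom.coe_coe, hodd, map_neg] using h
  have hanti_act : ∀ m n, m ≠ n →
      star (act (g m) a) * act (g n) a + act (g n) a * star (act (g m) a) = 0 := by
    intro m n hmn
    have hdisj := disjoint_Ico_mul_add (M := M) (Nat.succ_ne_succ_iff.2 hmn)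
    have hgc := gradedCommute_of_disjoint hβ hθ hθι hcomm hanti hdisj (star_mem (hloc m)) (hloc n)
    rw [hgc.anticommute (by rw [map_star, hodd_act, star_neg]) (hodd_act n), neg_add_cancel]
  refine eq_zero_of_compression_eq E _ (fun n => π (act (g n) a)) ‖a‖
    (fun n => ?_) (fun m n hmn => ?_) (fun n => ?_)
  · exact (NonUnitalStarAlgHom.norm_apply_le π _).trans (StarAlgEquiv.norm_map _ _).le
  · rw [← map_star, ← map_mul, ← map_mul, ← map_add, hanti_act m n hmn, map_zero]
  · exact mul_mul_eq_of_unitary_mul_eq (ContinuousLinearMap.isSelfAdjoint_iff'.2 hEsa)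
      (hUunitary _) (ContinuousLinearMap.ext fun x => hEinv x _) (hcov _ a)

/-- In the infinite Fermi C*-tensor product `A = ⊛_ℕ B`, if `a` is a
localized odd element (it lies in the algebraic part and `θ a = -a`), then for every
symmetric state `Ω`, the compression `E π(a) E` vanishes, where `E` is the projection
onto the `U(ℙ)`-invariant vectors of the covariant GNS representation. -/
theorem deFinetti_stmt13
(B : Type) [CStarAlgebra B] (β : B ≃⋆ₐ[ℂ] B) (hβ : ∀ b, β (β b) = b)
    (A : Type) [CStarAlgebra A]
    (θ : A ≃⋆ₐ[ℂ] A) (hθ : ∀ a, θ (θ a) = a)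
    (ι : ℕ → B →⋆ₐ[ℂ] A)
    (hθι : ∀ j b, θ (ι j b) = ι j (β b))
    (hdense :
      Dense ((StarAlgebra.adjoin ℂ (⋃ j, Set.range (ι j)) : StarSubalgebra ℂ A) : Set A))
    (hcomm : ∀ i j, i ≠ j → ∀ b b', (β b = b ∨ β b' = b') →
      ι i b * ι j b' = ι j b' * ι i b)
    (hanti : ∀ i j, i ≠ j → ∀ b b', β b = -b → β b' = -b' →
      ι i b * ι j b' = -(ι j b' * ι i b))
    (act : finitaryPerms → A ≃⋆ₐ[ℂ] A)
    (hactmul : ∀ g h x, act (g * h) x = act g (act h x))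
    (hactι : ∀ g j b, act g (ι j b) = ι ((g : Equiv.Perm ℕ) j) b)
    (Ω : A → ℂ) (hΩ : IsStateOn Ω)
    (hsym : ∀ g x, Ω (act g x) = Ω x)
(H : Type) [NormedAddCommGroup H] [InnerProductSpace ℂ H] [CompleteSpace H]
    (π : A →⋆ₐ[ℂ] (H →L[ℂ] H)) (ξ : H)
    (hcyc : Dense {x : H | ∃ a, π a ξ = x})
    (hrep : ∀ a, Ω a = (inner ℂ ξ (π a ξ) : ℂ))
    (U : finitaryPerms → (H →L[ℂ] H))
    (hUmul : ∀ g h, U (g * h) = U g * U h)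
    (hUunitary : ∀ g, U g ∈ unitary (H →L[ℂ] H))
    (hUξ : ∀ g, U g ξ = ξ)
    (hcov : ∀ g a, U g * π a = π (act g a) * U g)
(E : H →L[ℂ] H)
    (hEidem : E * E = E)
    (hEsa : ContinuousLinearMap.adjoint E = E)
    (hErange : ∀ x : H, (∀ g, U g x = x) ↔ E x = x)
    (hEinv : ∀ (x : H) (g), U g (E x) = E x) :
    ∀ a : A, a ∈ StarAlgebra.adjoin ℂ (⋃ j, Set.range (ι j)) → θ a = -a →
      E * π a * E = 0 :=
  deFinetti_stmt13_general B β hβ A θ hθ ι hθι hcomm hanti act hactι H π U hUunitary hcov E hEsa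
    hEinv
end

section
/- Let A = ⊛_ℕ B be the infinite Fermi C*-tensor product of a unital Z₂-graded C*-algebra B with the finite-permutation group ℙ acting, and let ω be a symmetric state that is strongly clustering. Then the U_ω(ℙ)-invariant vectors in H_ω form a one-dimensional subspace spanned by ξ_ω. -/
open scoped ComplexOrder

/-!
By covariance, `⟪U g (π a ξ), π b ξ⟫ = Ω (act g (star a) * b)`, so strong clustering says that
`U (gₙ)` converges weakly to the projection onto `ℂ ξ` on the dense set of vectors `π a ξ`. The
`U (gₙ)` are unitary, hence equicontinuous, so this convergence holds for all vectors. A vector `x`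
fixed by every `U g` satisfies `⟪x, v⟫ = ⟪U (gₙ) x, v⟫` for all `n`, hence
`⟪x, v⟫ = ⟪x, ξ⟫ ⟪ξ, v⟫` for a dense set of `v`, i.e. `x = ⟪ξ, x⟫ ξ`.
-/

open Filter Topology
open scoped NNReal InnerProductSpace

section

variable {H : Type*} [NormedAddCommGroup H] [InnerProductSpace ℂ H]

lemma lipschitzWith_inner_apply_left {T : H →L[ℂ] H} {C : ℝ≥0} (hT : ‖T‖₊ ≤ C) (v : H) :
    LipschitzWith (C * ‖v‖₊) fun x => ⟪T x, v⟫_ℂ := by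
  refine LipschitzWith.of_dist_le_mul fun x y => ?_
  rw [dist_eq_norm, dist_eq_norm, ← inner_sub_left, ← map_sub]
  calc ‖⟪T (x - y), v⟫_ℂ‖ ≤ ‖T (x - y)‖ * ‖v‖ := norm_inner_le_norm _ _
    _ ≤ C * ‖x - y‖ * ‖v‖ := by gcongr; exact T.le_of_opNorm_le hT _
    _ = _ := by push_cast; ring

lemma tendsto_inner_apply_of_dense {ι : Type*} {l : Filter ι} {T : ι → H →L[ℂ] H} {C : ℝ≥0}
    (hT : ∀ i, ‖T i‖₊ ≤ C) {D : Set H} (hD : Dense D) {f : H → ℂ} (hf : Continuous f) {v : H}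
    (h : ∀ u ∈ D, Tendsto (fun i => ⟪T i u, v⟫_ℂ) l (𝓝 (f u))) (x : H) :
    Tendsto (fun i => ⟪T i x, v⟫_ℂ) l (𝓝 (f x)) :=
  have hclosed := (LipschitzWith.uniformEquicontinuous _ _ fun i =>
    lipschitzWith_inner_apply_left (hT i) v).equicontinuous.isClosed_setOfPred_tendsto (l := l) hf
  hclosed.closure_subset_iff.mpr h (hD x)

theorem eq_inner_smul_of_forall_apply_eq_self {ι : Type*} {l : Filter ι} [l.NeBot]
    {T : ι → H →L[ℂ] H} {C : ℝ≥0} (hT : ∀ i, ‖T i‖₊ ≤ C) {D : Set H} (hD : Dense D) {ξ : H}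
    (h : ∀ u ∈ D, ∀ v ∈ D, Tendsto (fun i => ⟪T i u, v⟫_ℂ) l (𝓝 (⟪u, ξ⟫_ℂ * ⟪ξ, v⟫_ℂ)))
    {x : H} (hx : ∀ i, T i x = x) : x = ⟪ξ, x⟫_ℂ • ξ := by
  have h_on_D : ∀ v ∈ D, ⟪x, v⟫_ℂ = ⟪⟪ξ, x⟫_ℂ • ξ, v⟫_ℂ := by
    intro v hv
    have hlim := tendsto_inner_apply_of_dense hT hD (by fun_prop) (fun u hu => h u hu v hv) x
    simp only [hx] at hlim
    rw [inner_smul_left, inner_conj_symm]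
    exact tendsto_nhds_unique tendsto_const_nhds hlim
  exact ext_inner_right ℂ fun v =>
    congrFun (Continuous.ext_on hD (by fun_prop) (by fun_prop) h_on_D) v

variable [CompleteSpace H]

lemma nnnorm_le_one_of_mem_unitary {u : H →L[ℂ] H} (hu : u ∈ unitary (H →L[ℂ] H)) :
    ‖u‖₊ ≤ 1 :=
  u.opNNNorm_le_bound 1 fun x => by
    rw [one_mul, ← NNReal.coe_le_coe, coe_nnnorm, coe_nnnorm,
      ContinuousLinearMap.norm_map_of_mem_unitary hu]

lemma inner_map_apply_map_apply {A : Type*} [Semiring A] [Algebra ℂ A] [StarRing A]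
    (π : A →⋆ₐ[ℂ] (H →L[ℂ] H)) (a b : A) (x : H) :
    ⟪π a x, π b x⟫_ℂ = ⟪x, π (star a * b) x⟫_ℂ := by
  rw [map_mul, map_star, ContinuousLinearMap.star_eq_adjoint, mul_apply_eq_comp,
    ContinuousLinearMap.adjoint_inner_right]

end

theorem deFinetti_stmt18_general
    (A : Type) [CStarAlgebra A]
    (act : finitaryPerms → A ≃⋆ₐ[ℂ] A)
    (Ω : A → ℂ)
(H : Type) [NormedAddCommGroup H] [InnerProductSpace ℂ H] [CompleteSpace H]
    (π : A →⋆ₐ[ℂ] (H →L[ℂ] H)) (ξ : H)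
    (hcyc : Dense {x : H | ∃ a, π a ξ = x})
    (hrep : ∀ a, Ω a = (inner ℂ ξ (π a ξ) : ℂ))
    (U : finitaryPerms → (H →L[ℂ] H))
    (hUunitary : ∀ g, U g ∈ unitary (H →L[ℂ] H))
    (hUξ : ∀ g, U g ξ = ξ)
    (hcov : ∀ g a, U g * π a = π (act g a) * U g)
    (hclust : ∃ g : ℕ → finitaryPerms, ∀ a b : A,
      Filter.Tendsto (fun n => Ω (act (g n) a * b)) Filter.atTop (nhds (Ω a * Ω b))) :
    ∀ x : H, (∀ g, U g x = x) → ∃ c : ℂ, x = c • ξ := by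
  obtain ⟨g, hg⟩ := hclust
  intro x hx
  have hUπ : ∀ g a, U g (π a ξ) = π (act g a) ξ := fun g a => by
    simpa only [mul_apply_eq_comp, hUξ] using congr($(hcov g a) ξ)
  have hΩ_star : ∀ a, Ω (star a) = ⟪π a ξ, ξ⟫_ℂ := fun a => by
    rw [hrep, map_star, ContinuousLinearMap.star_eq_adjoint,
      ContinuousLinearMap.adjoint_inner_right]
  refine ⟨_, eq_inner_smul_of_forall_apply_eq_self (l := atTop)
    (fun n => nnnorm_le_one_of_mem_unitary (hUunitary (g n))) hcyc ?_ fun n => hx (g n)⟩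
  rintro _ ⟨a, rfl⟩ _ ⟨b, rfl⟩
  simp only [hUπ, inner_map_apply_map_apply, ← hrep, ← hΩ_star, ← map_star]
  exact hg (star a) b

/-- If a symmetric state `Ω` on the infinite Fermi C*-tensor product
`A = ⊛_ℕ B` is strongly clustering, then the `U(ℙ)`-invariant vectors in its GNS
space form the one-dimensional subspace spanned by the cyclic vector `ξ`. -/
theorem deFinetti_stmt18
(B : Type) [CStarAlgebra B] (β : B ≃⋆ₐ[ℂ] B) (hβ : ∀ b, β (β b) = b)
    (A : Type) [CStarAlgebra A]
    (θ : A ≃⋆ₐ[ℂ] A) (hθ : ∀ a, θ (θ a) = a)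
    (ι : ℕ → B →⋆ₐ[ℂ] A)
    (hθι : ∀ j b, θ (ι j b) = ι j (β b))
    (hdense :
      Dense ((StarAlgebra.adjoin ℂ (⋃ j, Set.range (ι j)) : StarSubalgebra ℂ A) : Set A))
    (hcomm : ∀ i j, i ≠ j → ∀ b b', (β b = b ∨ β b' = b') →
      ι i b * ι j b' = ι j b' * ι i b)
    (hanti : ∀ i j, i ≠ j → ∀ b b', β b = -b → β b' = -b' →
      ι i b * ι j b' = -(ι j b' * ι i b))
    (act : finitaryPerms → A ≃⋆ₐ[ℂ] A)
    (hactmul : ∀ g h x, act (g * h) x = act g (act h x))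
    (hactι : ∀ g j b, act g (ι j b) = ι ((g : Equiv.Perm ℕ) j) b)
    (Ω : A → ℂ) (hΩ : IsStateOn Ω)
    (hsym : ∀ g x, Ω (act g x) = Ω x)
(H : Type) [NormedAddCommGroup H] [InnerProductSpace ℂ H] [CompleteSpace H]
    (π : A →⋆ₐ[ℂ] (H →L[ℂ] H)) (ξ : H)
    (hcyc : Dense {x : H | ∃ a, π a ξ = x})
    (hrep : ∀ a, Ω a = (inner ℂ ξ (π a ξ) : ℂ))
    (U : finitaryPerms → (H →L[ℂ] H))
    (hUmul : ∀ g h, U (g * h) = U g * U h)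
    (hUunitary : ∀ g, U g ∈ unitary (H →L[ℂ] H))
    (hUξ : ∀ g, U g ξ = ξ)
    (hcov : ∀ g a, U g * π a = π (act g a) * U g)
    (hclust : ∃ g : ℕ → finitaryPerms, ∀ a b : A,
      Filter.Tendsto (fun n => Ω (act (g n) a * b)) Filter.atTop (nhds (Ω a * Ω b))) :
    ∀ x : H, (∀ g, U g x = x) → ∃ c : ℂ, x = c • ξ :=
  deFinetti_stmt18_general A act Ω H π ξ hcyc hrep U hUunitary hUξ hcov hclust
end
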